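/- Let n ≥ 6, let L be a 3-uniform list assignment of the prism graph Π_n, and let c be a lex-min proper L-coloring of Π_n. If some color class of c contains more than ⌈2n/3⌉ vertices, then c uses at least 4 distinct colors (i.e., c has at least 4 nonempty color classes). -/

import Mathlib

/-- The prism graph `Π_n = C_n □ K_2`, on vertex set `Fin n × Fin 2`:
`(i,j)` is adjacent to `(i',j')` iff `i = i'` and `j ≠ j'`, or `j = j'` and
`i' − i ≡ ±1 (mod n)`. -/
def prism (n : ℕ) : SimpleGraph (Fin n × Fin 2) :=
  SimpleGraph.fromRel (fun v w =>
    (v.1 = w.1 ∧ v.2 ≠ w.2) ∨ (v.2 = w.2 ∧ w.1.val = (v.1.val + 1) % n))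

/-- `c` is a proper `L`-coloring of the prism graph `Π_n`. -/
def IsProperListColoring {n : ℕ} (L : Fin n × Fin 2 → Finset ℕ)
    (c : Fin n × Fin 2 → ℕ) : Prop :=
  (∀ v, c v ∈ L v) ∧ ∀ v w, (prism n).Adj v w → c v ≠ c w

/-- The color class of color `k` under the coloring `c`. -/
def colorClass {n : ℕ} (c : Fin n × Fin 2 → ℕ) (k : ℕ) : Finset (Fin n × Fin 2) :=
  Finset.univ.filter (fun v => c v = k)

/-- The color word of `c`: the sizes of the nonempty color classes of `c`,
listed in decreasing order. -/
def colorWord {n : ℕ} (c : Fin n × Fin 2 → ℕ) : List ℕ :=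
  (((Finset.univ.image c).val.map (fun k => (colorClass c k).card)).sort (· ≤ ·)).reverse

/-- `c` is a lex-min proper `L`-coloring: it is a proper `L`-coloring and no proper
`L`-coloring has a lexicographically smaller color word. -/
def IsLexMin {n : ℕ} (L : Fin n × Fin 2 → Finset ℕ) (c : Fin n × Fin 2 → ℕ) : Prop :=
  IsProperListColoring L c ∧
    ∀ c', IsProperListColoring L c' → ¬ List.Lex (· < ·) (colorWord c') (colorWord c)

/-!
In a lex-min coloring, a vertex whose color class is not a singleton has its whole list among
the used colors: recoloring it with a fresh color would split a class of size `p` into classes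
of sizes `p - 1` and `1`, a lexicographically smaller word. So if `c` used at most three colors,
the big class forces exactly three colors `S`, and `L v = S` for every vertex `v` outside at most
one singleton class. But `Π_n` has a proper 3-coloring all of whose classes have at most
`⌈2n/3⌉` vertices (column `i` gets colors `a i` and `a i + 1` mod 3 along a suitable cyclic
sequence `a`). Renaming its colors into `S` so that the exceptional vertex keeps its color gives
a proper `L`-coloring whose largest class is smaller than that of `c`.
-/

namespace List

theorem lex_lt_of_count_lt {α : Type*} [LinearOrder α] {l l' : List α}
    (hl : l.Pairwise (· ≥ ·)) (hl' : l'.Pairwise (· ≥ ·)) {p : α}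
    (hp : l'.count p < l.count p) (hgt : ∀ y, p < y → l'.count y = l.count y) :
    Lex (· < ·) l' l := by
  induction l generalizing l' with
  | nil => simp at hp
  | cons a t ih =>
    cases l' with
    | nil => exact Lex.nil
    | cons b t' =>
      rcases lt_trichotomy b a with hba | rfl | hab
      · exact Lex.rel hba
      · refine Lex.cons (ih (pairwise_cons.1 hl).2 (pairwise_cons.1 hl').2 ?_ fun y hy => ?_)
        · simpa [count_cons] using hp
        · simpa [count_cons] using hgt y hy
      · exfalso
        by_cases hpb : p < b
        · have hb : b ∉ a :: t := fun hb => by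
            rcases mem_cons.1 hb with rfl | hb
            · exact lt_irrefl _ hab
            · exact absurd ((pairwise_cons.1 hl).1 b hb) (not_le.2 hab)
          have := hgt b hpb
          rw [count_eq_zero_of_not_mem hb, count_cons_self] at this
          omega
        · have hp : p ∈ a :: t := count_pos_iff.1 (by omega)
          have hpa : p ≤ a := by
            rcases mem_cons.1 hp with rfl | hp
            · exact le_rfl
            · exact (pairwise_cons.1 hl).1 p hp
          exact hpb (hpa.trans_lt hab)

end List

open Finset

section ColorWord

variable {n : ℕ}

theorem mem_colorClass {c : Fin n × Fin 2 → ℕ} {k : ℕ} {u : Fin n × Fin 2} :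
    u ∈ colorClass c k ↔ c u = k := by
  simp [colorClass]

def classSizes (c : Fin n × Fin 2 → ℕ) : Multiset ℕ :=
  (univ.image c).val.map fun k => #(colorClass c k)

theorem count_colorWord (c : Fin n × Fin 2 → ℕ) (y : ℕ) :
    (colorWord c).count y = (classSizes c).count y := by
  rw [colorWord, List.count_reverse, ← Multiset.coe_count, Multiset.sort_eq, classSizes]

theorem pairwise_colorWord (c : Fin n × Fin 2 → ℕ) : (colorWord c).Pairwise (· ≥ ·) :=
  List.pairwise_reverse.2 (Multiset.pairwise_sort _ _)

theorem mem_colorWord {c : Fin n × Fin 2 → ℕ} {x : ℕ} :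
    x ∈ colorWord c ↔ ∃ v, #(colorClass c (c v)) = x := by
  simp only [colorWord, List.mem_reverse, Multiset.mem_sort, Multiset.mem_map, mem_val,
    mem_image, mem_univ, true_and, exists_exists_eq_and]

theorem colorWord_lex_of_card_lt {c c' : Fin n × Fin 2 → ℕ} (v : Fin n × Fin 2)
    (h : ∀ w, #(colorClass c' (c' w)) < #(colorClass c (c v))) :
    List.Lex (· < ·) (colorWord c') (colorWord c) := by
  have hv : #(colorClass c (c v)) ∈ colorWord c := mem_colorWord.2 ⟨v, rfl⟩
  have hsorted := pairwise_colorWord c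
  rcases hw : colorWord c with _ | ⟨a, t⟩
  · simp [hw] at hv
  rcases hw' : colorWord c' with _ | ⟨b, t'⟩
  · exact List.Lex.nil
  obtain ⟨w, rfl⟩ := mem_colorWord.1 (hw' ▸ List.mem_cons_self : b ∈ colorWord c')
  have hva : #(colorClass c (c v)) ≤ a := by
    rw [hw] at hv hsorted
    rcases List.mem_cons.1 hv with hv | hv
    · exact hv.le
    · exact (List.pairwise_cons.1 hsorted).1 _ hv
  exact List.Lex.rel ((h w).trans_le hva)

end ColorWord

section Update

variable {n : ℕ} {L : Fin n × Fin 2 → Finset ℕ} {c : Fin n × Fin 2 → ℕ}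
  {v : Fin n × Fin 2} {s : ℕ}

theorem colorClass_update (c : Fin n × Fin 2 → ℕ) (v : Fin n × Fin 2) (s t : ℕ) :
    colorClass (Function.update c v s) t =
      if t = s then insert v (colorClass c t) else (colorClass c t).erase v := by
  ext u
  by_cases hu : u = v
  · subst hu; split_ifs <;> simp_all [mem_colorClass, eq_comm]
  · split_ifs <;> simp [mem_colorClass, hu]

theorem colorClass_eq_empty_of_notMem {k : ℕ} (hk : k ∉ univ.image c) : colorClass c k = ∅ :=
  filter_eq_empty_iff.2 fun u _ hu => hk (mem_image.2 ⟨u, mem_univ u, hu⟩)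

theorem image_update_of_ne {u : Fin n × Fin 2} (hu : u ≠ v) (huv : c u = c v) :
    univ.image (Function.update c v s) = insert s (univ.image c) := by
  ext t
  simp only [mem_image, mem_univ, true_and, mem_insert]
  constructor
  · rintro ⟨w, rfl⟩
    by_cases hw : w = v
    · simp [hw]
    · exact Or.inr ⟨w, (Function.update_of_ne hw _ _).symm⟩
  · rintro (rfl | ⟨w, rfl⟩)
    · exact ⟨v, Function.update_self _ _ _⟩
    · by_cases hw : w = v
      · exact ⟨u, by rw [Function.update_of_ne hu, huv, hw]⟩
      · exact ⟨w, Function.update_of_ne hw _ _⟩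

theorem classSizes_update (hs : s ∉ univ.image c) (hv : 2 ≤ #(colorClass c (c v))) :
    ∃ M, classSizes c = #(colorClass c (c v)) ::ₘ M ∧
      classSizes (Function.update c v s) = 1 ::ₘ (#(colorClass c (c v)) - 1) ::ₘ M := by
  set E := (univ.image c).erase (c v)
  have hvE : c v ∉ E := notMem_erase _ _
  have himage : univ.image c = insert (c v) E :=
    (insert_erase (mem_image_of_mem c (mem_univ v))).symm
  have hsE : s ∉ insert (c v) E := himage ▸ hs
  obtain ⟨u, hu, huv⟩ := exists_mem_ne (show 1 < #(colorClass c (c v)) by omega) v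
  refine ⟨E.val.map fun t => #(colorClass c t), ?_, ?_⟩
  · rw [classSizes, himage, insert_val_of_notMem hvE, Multiset.map_cons]
  · have hsv : c v ≠ s := fun h => hs (h ▸ mem_image_of_mem c (mem_univ v))
    rw [classSizes, image_update_of_ne huv (mem_colorClass.1 hu), himage,
      insert_val_of_notMem hsE, insert_val_of_notMem hvE, Multiset.map_cons, Multiset.map_cons,
      colorClass_update, if_pos rfl, colorClass_eq_empty_of_notMem hs, colorClass_update,
      if_neg hsv, card_erase_of_mem (mem_colorClass.2 rfl)]
    refine congrArg _ (congrArg _ (Multiset.map_congr rfl fun t ht => ?_))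
    have htE : t ∈ E := ht
    have htv : t ≠ c v := ne_of_mem_erase htE
    have hts : t ≠ s := fun h => hs (h ▸ mem_of_mem_erase htE)
    rw [colorClass_update, if_neg hts, erase_eq_of_notMem (fun h => htv (mem_colorClass.1 h).symm)]

theorem colorWord_update_lex (hs : s ∉ univ.image c) (hv : 2 ≤ #(colorClass c (c v))) :
    List.Lex (· < ·) (colorWord (Function.update c v s)) (colorWord c) := by
  obtain ⟨M, hM, hM'⟩ := classSizes_update hs hv
  refine List.lex_lt_of_count_lt (pairwise_colorWord c) (pairwise_colorWord _)
    (p := #(colorClass c (c v))) ?_ fun y hy => ?_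
  · simp only [count_colorWord, hM, hM', Multiset.count_cons]
    split_ifs <;> omega
  · simp only [count_colorWord, hM, hM', Multiset.count_cons]
    split_ifs <;> omega

theorem IsProperListColoring.update (hc : IsProperListColoring L c) (hs : s ∉ univ.image c)
    (hsv : s ∈ L v) : IsProperListColoring L (Function.update c v s) := by
  have hcs : ∀ u, c u ≠ s := fun u h => hs (h ▸ mem_image_of_mem c (mem_univ u))
  refine ⟨fun u => ?_, fun u w huw => ?_⟩
  · by_cases hu : u = v
    · subst hu; simpa using hsv
    · simpa [hu] using hc.1 u
  · have := huw.ne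
    simp only [Function.update_apply]
    split_ifs <;> grind [hc.2 u w huw, hcs u, hcs w]

theorem IsLexMin.subset_image (hc : IsLexMin L c) (hv : 2 ≤ #(colorClass c (c v))) :
    L v ⊆ univ.image c :=
  fun _ hs => by_contra fun hsc => hc.2 _ (hc.1.update hsc hs) (colorWord_update_lex hsc hv)

end Update

section Pattern

variable {n : ℕ}

/-- A cyclically proper sequence of length `n` in `{0, 1, 2}` taking each value at least
`⌊n / 3⌋` times. -/
def prismPattern (n i : ℕ) : ℕ := if n % 3 = 1 ∧ i = n - 1 then 1 else i % 3

def prismColor (n : ℕ) (v : Fin n × Fin 2) : Fin 3 :=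
  ⟨(prismPattern n v.1 + v.2) % 3, Nat.mod_lt _ (by norm_num)⟩

theorem prismPattern_lt (n i : ℕ) : prismPattern n i < 3 := by
  unfold prismPattern; split_ifs <;> omega

theorem prismPattern_succ_ne (h3 : 3 ≤ n) {i : ℕ} (hi : i < n) :
    prismPattern n ((i + 1) % n) ≠ prismPattern n i := by
  rcases Nat.lt_or_ge (i + 1) n with h | h
  · rw [Nat.mod_eq_of_lt h]
    unfold prismPattern; split_ifs <;> omega
  · rw [show i + 1 = n by omega, Nat.mod_self]
    unfold prismPattern; split_ifs <;> omega

theorem prismColor_ne_of_adj (h3 : 3 ≤ n) {v w : Fin n × Fin 2} (h : (prism n).Adj v w) :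
    prismColor n v ≠ prismColor n w := by
  rw [prism, SimpleGraph.fromRel_adj] at h
  obtain ⟨hne, hrel⟩ := h
  simp only [prismColor, ne_eq, Fin.mk.injEq]
  have := v.2.isLt
  have := w.2.isLt
  have := prismPattern_lt n v.1
  have := prismPattern_lt n w.1
  rcases hrel with (⟨h1, h2⟩ | ⟨h1, h2⟩) | (⟨h1, h2⟩ | ⟨h1, h2⟩)
  · rw [h1]; omega
  · have := prismPattern_succ_ne h3 v.1.isLt
    rw [← h2, h1] at *; omega
  · rw [h1]; omega
  · have := prismPattern_succ_ne h3 w.1.isLt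
    rw [← h2, h1] at *; omega

theorem card_prismColor_fiber (j : Fin 3) :
    #{v | prismColor n v = j} = #{i : Fin n | prismPattern n i ≠ (j + 1) % 3} := by
  rw [card_filter, card_filter, Fintype.sum_prod_type]
  refine sum_congr rfl fun i _ => ?_
  have := prismPattern_lt n i
  have := j.isLt
  simp only [Fin.sum_univ_two, prismColor, Fin.ext_iff]
  split_ifs <;> simp_all <;> omega

theorem div_three_le_card_prismPattern_eq (h3 : 3 ≤ n) {s : ℕ} (hs : s < 3) :
    n / 3 ≤ #{i : Fin n | prismPattern n i = s} := by
  have hlt : ∀ q < n / 3, 3 * q + s < n := fun q hq => by omega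
  calc n / 3 = #(range (n / 3)) := (card_range _).symm
    _ ≤ _ := by
      refine card_le_card_of_injOn (fun q => ⟨(3 * q + s) % n, Nat.mod_lt _ (by omega)⟩)
        (fun q hq => ?_) (fun q hq q' hq' h => ?_)
      · have hq := mem_range.1 hq
        simp only [coe_filter, Set.mem_ofPred_eq, mem_univ, true_and, Nat.mod_eq_of_lt (hlt q hq)]
        unfold prismPattern; split_ifs <;> omega
      · have := Fin.val_eq_of_eq h
        simp only [Nat.mod_eq_of_lt (hlt q (mem_range.1 hq)),
          Nat.mod_eq_of_lt (hlt q' (mem_range.1 hq'))] at this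
        omega

theorem card_prismColor_fiber_le (h3 : 3 ≤ n) (j : Fin 3) :
    #{v | prismColor n v = j} ≤ 2 * n ⌈/⌉ 3 := by
  have hsplit := card_filter_add_card_filter_not (s := univ)
    (fun i : Fin n => prismPattern n i = (j + 1) % 3)
  have hbound := div_three_le_card_prismPattern_eq h3 (Nat.mod_lt (j + 1) (by norm_num))
  rw [card_prismColor_fiber, Nat.ceilDiv_eq_add_pred_div]
  simp only [card_univ, Fintype.card_fin] at hsplit
  simp only [ne_eq]
  omega

theorem exists_prism_coloring_of_card_eq_three (h3 : 3 ≤ n) {S : Finset ℕ}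
    (hS : #S = 3) (v₀ : Fin n × Fin 2) {s₀ : ℕ} (hs₀ : s₀ ∈ S) :
    ∃ c : Fin n × Fin 2 → ℕ, c v₀ = s₀ ∧ (∀ v, c v ∈ S) ∧
      (∀ v w, (prism n).Adj v w → c v ≠ c w) ∧
      ∀ v, #(colorClass c (c v)) ≤ 2 * n ⌈/⌉ 3 := by
  set e := S.equivFinOfCardEq hS
  set σ : Fin 3 ≃ S := (e.trans (Equiv.swap (e ⟨s₀, hs₀⟩) (prismColor n v₀))).symm
  have hσ : ∀ j j', (σ j : ℕ) = σ j' ↔ j = j' := fun j j' =>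
    Subtype.val_injective.eq_iff.trans σ.injective.eq_iff
  refine ⟨fun v => σ (prismColor n v), ?_, fun v => (σ _).2,
    fun v w h => (hσ _ _).not.2 (prismColor_ne_of_adj h3 h), fun v => ?_⟩
  · simp [σ]
  · convert card_prismColor_fiber_le h3 (prismColor n v) using 2
    ext w
    simp [mem_colorClass, hσ]

end Pattern

section ClassSizes

variable {n : ℕ} {c : Fin n × Fin 2 → ℕ}

theorem sum_card_colorClass (c : Fin n × Fin 2 → ℕ) :
    ∑ k ∈ univ.image c, #(colorClass c k) = 2 * n := by
  simpa [colorClass, mul_comm] using (card_eq_sum_card_image c univ).symm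

theorem card_colorClass_le (hc : ∀ v w, (prism n).Adj v w → c v ≠ c w) (k : ℕ) :
    #(colorClass c k) ≤ n := by
  calc #(colorClass c k) ≤ #(univ : Finset (Fin n)) := by
        refine card_le_card_of_injOn Prod.fst (fun _ _ => mem_univ _) fun v hv w hw hvw => ?_
        by_contra hne
        have hadj : (prism n).Adj v w := by
          rw [prism, SimpleGraph.fromRel_adj]
          exact ⟨hne, .inl (.inl ⟨hvw, fun h => hne (Prod.ext hvw h)⟩)⟩
        exact hc v w hadj ((mem_colorClass.1 hv).trans (mem_colorClass.1 hw).symm)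
    _ = n := by simp

/-- With at most three colors, two singleton classes would leave `2n - 2 > n` vertices to the
third class. -/
theorem eq_of_card_colorClass_eq_one (h3 : 3 ≤ n)
    (hc : ∀ v w, (prism n).Adj v w → c v ≠ c w) (himg : #(univ.image c) ≤ 3)
    {v w : Fin n × Fin 2} (hv : #(colorClass c (c v)) = 1)
    (hw : #(colorClass c (c w)) = 1) : v = w := by
  by_contra hvw
  have hcvw : c v ≠ c w := fun h =>
    hvw (card_le_one.1 hv.le v (mem_colorClass.2 rfl) w (mem_colorClass.2 h.symm))
  have hv' : c v ∈ univ.image c := mem_image_of_mem c (mem_univ v)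
  have hw' : c w ∈ (univ.image c).erase (c v) :=
    mem_erase.2 ⟨hcvw.symm, mem_image_of_mem c (mem_univ w)⟩
  have hrest : ∑ k ∈ ((univ.image c).erase (c v)).erase (c w), #(colorClass c k) ≤ 1 * n := by
    refine (sum_le_card_nsmul _ _ n fun k _ => card_colorClass_le hc k).trans ?_
    rw [smul_eq_mul, card_erase_of_mem hw', card_erase_of_mem hv']
    exact Nat.mul_le_mul_right n (by omega)
  have := sum_card_colorClass c
  rw [← add_sum_erase _ _ hv', ← add_sum_erase _ _ hw', hv, hw] at this
  omega

theorem exists_forall_ne_two_le_card_colorClass (h3 : 3 ≤ n)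
    (hc : ∀ v w, (prism n).Adj v w → c v ≠ c w) (himg : #(univ.image c) ≤ 3) :
    ∃ v₀, ∀ v ≠ v₀, 2 ≤ #(colorClass c (c v)) := by
  have hpos : ∀ v, 1 ≤ #(colorClass c (c v)) := fun v =>
    card_pos.2 ⟨v, mem_colorClass.2 rfl⟩
  by_cases h : ∃ v₀, #(colorClass c (c v₀)) = 1
  · obtain ⟨v₀, hv₀⟩ := h
    refine ⟨v₀, fun v hv => ?_⟩
    have := hpos v
    have := mt (fun h => eq_of_card_colorClass_eq_one h3 hc himg h hv₀) hv
    omega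
  · push Not at h
    refine ⟨(⟨0, by omega⟩, 0), fun v _ => ?_⟩
    have := hpos v
    have := h v
    omega

end ClassSizes

/-- If `n ≥ 6`, `L` is a 3-uniform list assignment of `Π_n`, `c` is a lex-min proper
`L`-coloring, and some color class of `c` has more than `⌈2n/3⌉` vertices, then `c`
uses at least 4 distinct colors. -/
theorem lexmin_unbounded_four_colors (n : ℕ) (hn : 6 ≤ n)
    (L : Fin n × Fin 2 → Finset ℕ) (hL : ∀ v, (L v).card = 3)
    (c : Fin n × Fin 2 → ℕ) (hc : IsLexMin L c)
    (hbig : ∃ k : ℕ, 2 * n ⌈/⌉ 3 < (colorClass c k).card) :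
    4 ≤ (Finset.univ.image c).card := by
  obtain ⟨k, hk⟩ := hbig
  have h3 : 3 ≤ n := by omega
  have h2 : 2 ≤ 2 * n ⌈/⌉ 3 := by rw [Nat.ceilDiv_eq_add_pred_div]; omega
  by_contra! h4
  obtain ⟨v₁, hv₁⟩ : (colorClass c k).Nonempty := card_pos.1 (by omega)
  rw [← mem_colorClass.1 hv₁] at hk
  have hS : #(univ.image c) = 3 :=
    le_antisymm (by omega) (hL v₁ ▸ card_le_card (hc.subset_image (by omega)))
  obtain ⟨v₀, hv₀⟩ := exists_forall_ne_two_le_card_colorClass h3 hc.1.2 hS.le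
  obtain ⟨c', hc'v₀, hc'S, hc'adj, hc'card⟩ :=
    exists_prism_coloring_of_card_eq_three h3 hS v₀ (mem_image_of_mem c (mem_univ v₀))
  have hc' : IsProperListColoring L c' := by
    refine ⟨fun v => ?_, hc'adj⟩
    by_cases hv : v = v₀
    · exact hv ▸ hc'v₀ ▸ hc.1.1 v₀
    · exact eq_of_subset_of_card_le (hc.subset_image (hv₀ v hv)) (by rw [hL, hS]) ▸ hc'S v
  exact hc.2 c' hc' (colorWord_lex_of_card_lt v₁ fun w => (hc'card w).trans_lt hk)
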